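/- (Hyperbolic right-triangle trigonometry) Let a, r, b ∈ 𝐇 be pairwise distinct points with a right angle at r, i.e., t_r(a) ∗ t_r(b) = 0. Set B = d(a,r), A = d(r,b), C = d(a,b), and let α be the angle at a, i.e., cos α = t_a(b) ∗ t_a(r) and sin α = √(1 − cos²α). Then cos α = tanh(B)/tanh(C), sin α = sinh(A)/sinh(C), and tan α = tanh(A)/sinh(B). -/

import Mathlib

noncomputable section

/-- The Lorentzian inner product `u ∗ v = u₁v₁ + u₂v₂ − u₃v₃` on ℝ³. -/
def lor (u v : Fin 3 → ℝ) : ℝ := u 0 * v 0 + u 1 * v 1 - u 2 * v 2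

/-- The hyperboloid model of the hyperbolic plane. -/
def Hyp : Set (Fin 3 → ℝ) := {u | lor u u = -1 ∧ 0 < u 2}

/-- The Lorentzian cross product `u ⊗ v = J (u × v)`, `J = diag(1,1,−1)`. -/
def lcross (u v : Fin 3 → ℝ) : Fin 3 → ℝ :=
  ![u 1 * v 2 - u 2 * v 1, u 2 * v 0 - u 0 * v 2, -(u 0 * v 1 - u 1 * v 0)]

/-- Lorentzian magnitude `‖w‖ = √(w ∗ w)` (for `w` with `w ∗ w ≥ 0`). -/
def lnorm (w : Fin 3 → ℝ) : ℝ := Real.sqrt (lor w w)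

/-- The unit tangent vector at `p` toward `y`:
`t_p(y) = (y + (p ∗ y)p)/√(y ∗ y + (p ∗ y)²)`. -/
def tang (p y : Fin 3 → ℝ) : Fin 3 → ℝ :=
  (Real.sqrt (lor y y + lor p y ^ 2))⁻¹ • (y + lor p y • p)

/-- Inverse hyperbolic cosine. -/
def arcosh (x : ℝ) : ℝ := Real.log (x + Real.sqrt (x ^ 2 - 1))

/-- Hyperbolic distance between points of the hyperboloid: `d(p,q) = arccosh(−p ∗ q)`. -/
def dHyp (p q : Fin 3 → ℝ) : ℝ := arcosh (-lor p q)

/-!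
With `cosh d(p,q) = −p ∗ q`, the inner product of two unit tangents at `p` is the hyperbolic law
of cosines, `t_p(y) ∗ t_p(z) = (cosh d(p,y) cosh d(p,z) − cosh d(y,z)) / (sinh d(p,y) sinh d(p,z))`.
A right angle at `r` therefore means `cosh C = cosh A cosh B`, and the three identities follow
from this hyperbolic Pythagorean theorem and `cosh² − sinh² = 1` alone.
-/

open Real

section RightTriangle

variable {A B C : ℝ}

theorem right_triangle_cosine (hpyth : cosh C = cosh A * cosh B) (hB : 0 < B) :
    (cosh C * cosh B - cosh A) / (sinh C * sinh B) = cosh A * sinh B / sinh C := by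
  have hsinhB : sinh B ≠ 0 := (sinh_pos_iff.2 hB).ne'
  rw [hpyth, show cosh A * cosh B * cosh B - cosh A = cosh A * sinh B ^ 2 by
    linear_combination cosh A * cosh_sq B]
  field_simp

theorem right_triangle_cosine_eq_tanh_div_tanh (hpyth : cosh C = cosh A * cosh B) :
    cosh A * sinh B / sinh C = tanh B / tanh C := by
  have hcoshB : cosh B ≠ 0 := (cosh_pos B).ne'
  rw [tanh_eq_sinh_div_cosh, tanh_eq_sinh_div_cosh, div_div_div_eq, hpyth]
  field_simp

theorem right_triangle_sine (hpyth : cosh C = cosh A * cosh B) (hA : 0 ≤ A) (hC : 0 < C) :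
    √(1 - (cosh A * sinh B / sinh C) ^ 2) = sinh A / sinh C := by
  have hsinhC : 0 < sinh C := sinh_pos_iff.2 hC
  have hsq : 1 - (cosh A * sinh B / sinh C) ^ 2 = (sinh A / sinh C) ^ 2 := by
    field_simp
    linear_combination
      -cosh_sq C + cosh A ^ 2 * cosh_sq B + cosh_sq A + (cosh C + cosh A * cosh B) * hpyth
  rw [hsq, sqrt_sq (div_nonneg (sinh_nonneg_iff.2 hA) hsinhC.le)]

theorem right_triangle_sine_div_cosine (hC : 0 < C) :
    sinh A / sinh C / (cosh A * sinh B / sinh C) = tanh A / sinh B := by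
  have hsinhC : sinh C ≠ 0 := (sinh_pos_iff.2 hC).ne'
  have hcoshA : cosh A ≠ 0 := (cosh_pos A).ne'
  rw [tanh_eq_sinh_div_cosh]
  field_simp

end RightTriangle

theorem lor_comm (u v : Fin 3 → ℝ) : lor u v = lor v u := by
  simp only [lor]; ring

theorem eq_of_mem_Hyp_of_spatial_eq {p q : Fin 3 → ℝ} (hp : p ∈ Hyp) (hq : q ∈ Hyp)
    (h0 : p 0 = q 0) (h1 : p 1 = q 1) : p = q := by
  have h2 : p 2 = q 2 := by
    have hsq : p 2 ^ 2 = q 2 ^ 2 := by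
      have hp1 := hp.1
      have hq1 := hq.1
      simp only [lor] at hp1 hq1
      rw [h0, h1] at hp1
      linear_combination hq1 - hp1
    exact (pow_left_inj₀ hp.2.le hq.2.le two_ne_zero).1 hsq
  ext i; fin_cases i <;> assumption

/-- Reverse Cauchy–Schwarz on the hyperboloid, as a sum-of-squares identity. -/
theorem sq_mul_sub_sq_add_one_eq {p q : Fin 3 → ℝ} (hp : lor p p = -1) (hq : lor q q = -1) :
    (p 2 * q 2) ^ 2 - (1 + p 0 * q 0 + p 1 * q 1) ^ 2
      = (p 0 - q 0) ^ 2 + (p 1 - q 1) ^ 2 + (p 0 * q 1 - p 1 * q 0) ^ 2 := by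
  simp only [lor] at hp hq
  linear_combination (-(q 2 ^ 2)) * hp - (p 0 ^ 2 + p 1 ^ 2 + 1) * hq

theorem one_lt_neg_lor {p q : Fin 3 → ℝ} (hp : p ∈ Hyp) (hq : q ∈ Hyp) (hpq : p ≠ q) :
    1 < -lor p q := by
  have hspatial : 0 < (p 0 - q 0) ^ 2 + (p 1 - q 1) ^ 2 := by
    by_contra! h
    have h0 : (p 0 - q 0) ^ 2 = 0 :=
      le_antisymm (by nlinarith [sq_nonneg (p 1 - q 1)]) (sq_nonneg _)
    have h1 : (p 1 - q 1) ^ 2 = 0 :=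
      le_antisymm (by nlinarith [sq_nonneg (p 0 - q 0)]) (sq_nonneg _)
    exact hpq (eq_of_mem_Hyp_of_spatial_eq hp hq (by simpa [sub_eq_zero] using h0)
      (by simpa [sub_eq_zero] using h1))
  have hsq : (1 + p 0 * q 0 + p 1 * q 1) ^ 2 < (p 2 * q 2) ^ 2 := by
    nlinarith [sq_mul_sub_sq_add_one_eq hp.1 hq.1, sq_nonneg (p 0 * q 1 - p 1 * q 0)]
  have := lt_of_abs_lt (abs_lt_of_sq_lt_sq hsq (mul_pos hp.2 hq.2).le)
  simp only [lor]; linarith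

theorem one_le_neg_lor {p q : Fin 3 → ℝ} (hp : p ∈ Hyp) (hq : q ∈ Hyp) : 1 ≤ -lor p q := by
  rcases eq_or_ne p q with rfl | hpq
  · rw [hp.1, neg_neg]
  · exact (one_lt_neg_lor hp hq hpq).le

theorem arcosh_eq_real_arcosh : _root_.arcosh = Real.arcosh := rfl

theorem dHyp_comm (p q : Fin 3 → ℝ) : dHyp p q = dHyp q p := by
  rw [dHyp, dHyp, lor_comm]

theorem dHyp_pos {p q : Fin 3 → ℝ} (hp : p ∈ Hyp) (hq : q ∈ Hyp) (hpq : p ≠ q) :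
    0 < dHyp p q :=
  Real.arcosh_pos (one_lt_neg_lor hp hq hpq)

theorem cosh_dHyp {p q : Fin 3 → ℝ} (hp : p ∈ Hyp) (hq : q ∈ Hyp) :
    cosh (dHyp p q) = -lor p q :=
  Real.cosh_arcosh (one_le_neg_lor hp hq)

theorem sinh_dHyp {p q : Fin 3 → ℝ} (hp : p ∈ Hyp) (hq : q ∈ Hyp) :
    sinh (dHyp p q) = √(lor p q ^ 2 - 1) := by
  rw [dHyp, arcosh_eq_real_arcosh, Real.sinh_arcosh (one_le_neg_lor hp hq), neg_sq]

theorem lor_smul_smul (s t : ℝ) (u v : Fin 3 → ℝ) : lor (s • u) (t • v) = s * t * lor u v := by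
  simp only [lor, Pi.smul_apply, smul_eq_mul]; ring

theorem lor_add_smul_add_smul (y z p : Fin 3 → ℝ) (α β : ℝ) :
    lor (y + α • p) (z + β • p) = lor y z + β * lor y p + α * lor p z + α * β * lor p p := by
  simp only [lor, Pi.add_apply, Pi.smul_apply, smul_eq_mul]; ring

theorem lor_tang_tang_of_lor_self {p : Fin 3 → ℝ} (hp : lor p p = -1) (y z : Fin 3 → ℝ) :
    lor (tang p y) (tang p z) = (lor y z + lor p y * lor p z) /
      (√(lor y y + lor p y ^ 2) * √(lor z z + lor p z ^ 2)) := by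
  rw [tang, tang, lor_smul_smul, lor_add_smul_add_smul, hp, lor_comm y p, div_eq_mul_inv, mul_inv]
  ring

theorem lor_tang_tang {p y z : Fin 3 → ℝ} (hp : p ∈ Hyp) (hy : y ∈ Hyp) (hz : z ∈ Hyp) :
    lor (tang p y) (tang p z) = (cosh (dHyp p y) * cosh (dHyp p z) - cosh (dHyp y z)) /
      (sinh (dHyp p y) * sinh (dHyp p z)) := by
  rw [lor_tang_tang_of_lor_self hp.1, hy.1, hz.1, cosh_dHyp hp hy, cosh_dHyp hp hz,
    cosh_dHyp hy hz, sinh_dHyp hp hy, sinh_dHyp hp hz]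
  simp only [neg_add_eq_sub]
  ring

theorem cosh_dHyp_eq_mul_of_right_angle {a r b : Fin 3 → ℝ} (ha : a ∈ Hyp) (hr : r ∈ Hyp)
    (hb : b ∈ Hyp) (har : a ≠ r) (hrb : r ≠ b) (hright : lor (tang r a) (tang r b) = 0) :
    cosh (dHyp a b) = cosh (dHyp r b) * cosh (dHyp a r) := by
  have hsinh : sinh (dHyp r a) * sinh (dHyp r b) ≠ 0 :=
    (mul_pos (sinh_pos_iff.2 (dHyp_pos hr ha har.symm)) (sinh_pos_iff.2 (dHyp_pos hr hb hrb))).ne'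
  rw [lor_tang_tang hr ha hb, div_eq_zero_iff, or_iff_left hsinh, dHyp_comm r a] at hright
  linarith

/-- Proposition 3.5 (hyperbolic right-triangle trigonometry, timelike case): in a
hyperbolic right triangle with right angle at `r`, legs `B = d(a,r)`, `A = d(r,b)`,
hypotenuse `C = d(a,b)`, and angle `α` at `a`:
`cos α = tanh B / tanh C`, `sin α = sinh A / sinh C`, `tan α = tanh A / sinh B`. -/
theorem hyperbolic_right_triangle_trig
    (a r b : Fin 3 → ℝ) (ha : a ∈ Hyp) (hr : r ∈ Hyp) (hb : b ∈ Hyp)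
    (har : a ≠ r) (hrb : r ≠ b) (hab : a ≠ b)
    (hright : lor (tang r a) (tang r b) = 0) :
    lor (tang a b) (tang a r) = Real.tanh (dHyp a r) / Real.tanh (dHyp a b) ∧
    Real.sqrt (1 - lor (tang a b) (tang a r) ^ 2)
      = Real.sinh (dHyp r b) / Real.sinh (dHyp a b) ∧
    Real.sqrt (1 - lor (tang a b) (tang a r) ^ 2) / lor (tang a b) (tang a r)
      = Real.tanh (dHyp r b) / Real.sinh (dHyp a r) := by
  have hpyth := cosh_dHyp_eq_mul_of_right_angle ha hr hb har hrb hright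
  have hC := dHyp_pos ha hb hab
  have hcos : lor (tang a b) (tang a r) = cosh (dHyp r b) * sinh (dHyp a r) / sinh (dHyp a b) := by
    rw [lor_tang_tang ha hb hr, dHyp_comm b r]
    exact right_triangle_cosine hpyth (dHyp_pos ha hr har)
  have hsin : √(1 - lor (tang a b) (tang a r) ^ 2) = sinh (dHyp r b) / sinh (dHyp a b) := by
    rw [hcos]
    exact right_triangle_sine hpyth (dHyp_pos hr hb hrb).le hC
  refine ⟨?_, hsin, ?_⟩
  · rw [hcos, right_triangle_cosine_eq_tanh_div_tanh hpyth]
  · rw [hsin, hcos, right_triangle_sine_div_cosine hC]
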